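/- arXiv:2103.03946 — 8 statements merged into one kernel-verified Lean document; each statement's English description precedes it below -/
import Mathlib

section
/- Let X be a finite alphabet, F a set of words over X, and w a word over X. In the free associative algebra k⟨X⟩ = MonoidAlgebra k (FreeMonoid X) over a field k, the element corresponding to the word w lies in the two-sided ideal generated by the elements corresponding to the words of F if and only if some f ∈ F is a contiguous factor of w, i.e. there exist words u, v with w = u ++ f ++ v. -/
/-!
If a set `T` of words is closed under multiplication by words on both sides, the polynomials
supported in `T` form a two-sided ideal of `k⟨X⟩`. For `T` the set of words having a factor in `F`
this ideal contains `F`, so every monomial of an element of the ideal generated by `F` lies in `T`.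
Conversely `u * f * v` is a multiple of `f` on both sides.
-/

namespace MonoidAlgebra

variable {k G : Type*} [Ring k] [Monoid G]

noncomputable def supportedTwoSidedIdeal (T : Set G) (mul_mem_left : ∀ a b, b ∈ T → a * b ∈ T)
    (mul_mem_right : ∀ a b, a ∈ T → a * b ∈ T) : TwoSidedIdeal (MonoidAlgebra k G) := by
  classical
  exact .mk' {x | ∀ m ∈ x.coeff.support, m ∈ T}
    (by simp)
    (fun hx hy m hm ↦ (Finset.mem_union.1 (Finsupp.support_add hm)).elim (hx m) (hy m))
    (fun hx m hm ↦ hx m (by simpa using hm))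
    (fun {x y} hy m hm ↦ by
      obtain ⟨a, -, b, hb, rfl⟩ := Finset.mem_mul.1 (support_coeff_mul_subset x y hm)
      exact mul_mem_left a b (hy b hb))
    (fun {x y} hx m hm ↦ by
      obtain ⟨a, ha, b, -, rfl⟩ := Finset.mem_mul.1 (support_coeff_mul_subset x y hm)
      exact mul_mem_right a b (hx a ha))

theorem mem_supportedTwoSidedIdeal {T : Set G} {hl hr} {x : MonoidAlgebra k G} :
    x ∈ supportedTwoSidedIdeal T hl hr ↔ ∀ m ∈ x.coeff.support, m ∈ T := by
  classical
  simp [supportedTwoSidedIdeal]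

theorem mem_twoSidedIdeal_span_of_image {s : Set G} {x : MonoidAlgebra k G} :
    x ∈ TwoSidedIdeal.span (of k G '' s) ↔
      ∀ m ∈ x.coeff.support, ∃ m' ∈ s, ∃ u v, m = u * m' * v := by
  constructor
  · intro hx
    let I : TwoSidedIdeal (MonoidAlgebra k G) :=
      supportedTwoSidedIdeal {m | ∃ m' ∈ s, ∃ u v, m = u * m' * v}
        (fun a _ ⟨m', hm', u, v, h⟩ ↦ ⟨m', hm', a * u, v, by rw [h]; simp only [mul_assoc]⟩)
        (fun _ b ⟨m', hm', u, v, h⟩ ↦ ⟨m', hm', u, v * b, by rw [h]; simp only [mul_assoc]⟩)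
    suffices TwoSidedIdeal.span (of k G '' s) ≤ I from mem_supportedTwoSidedIdeal.1 (this hx)
    rw [TwoSidedIdeal.span_le]
    rintro _ ⟨m', hm', rfl⟩
    refine mem_supportedTwoSidedIdeal.2 fun m hm ↦ ⟨m', hm', 1, 1, ?_⟩
    simpa using Finsupp.support_single_subset hm
  · intro hx
    rw [← x.sum_coeff_single]
    refine sum_mem fun m hm ↦ ?_
    obtain ⟨m', hm', u, v, rfl⟩ := hx m hm
    have hfactor : single (u * m' * v) (x.coeff (u * m' * v)) =
        single u (x.coeff (u * m' * v)) * of k G m' * of k G v := by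
      simp
    rw [hfactor]
    exact TwoSidedIdeal.mul_mem_right _ _ _
      (TwoSidedIdeal.mul_mem_left _ _ _ (TwoSidedIdeal.subset_span ⟨m', hm', rfl⟩))

end MonoidAlgebra

theorem monomial_mem_twoSidedIdeal_span_iff_factor_general
    (k X : Type*) [Field k]
    (F : Set (FreeMonoid X)) (w : FreeMonoid X) :
    MonoidAlgebra.of k (FreeMonoid X) w ∈
      TwoSidedIdeal.span ((MonoidAlgebra.of k (FreeMonoid X)) '' F) ↔
    ∃ f ∈ F, ∃ u v : FreeMonoid X, w = u * f * v := by
  rw [MonoidAlgebra.mem_twoSidedIdeal_span_of_image]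
  simp [MonoidAlgebra.of_apply]

/-- In the free associative algebra `k⟨X⟩ = MonoidAlgebra k (FreeMonoid X)`, the element
corresponding to a word `w` lies in the two-sided ideal generated by the elements corresponding
to the words of `F` if and only if some `f ∈ F` is a contiguous factor of `w`. -/
theorem monomial_mem_twoSidedIdeal_span_iff_factor
    (k X : Type*) [Field k] [Fintype X]
    (F : Set (FreeMonoid X)) (w : FreeMonoid X) :
    MonoidAlgebra.of k (FreeMonoid X) w ∈
      TwoSidedIdeal.span ((MonoidAlgebra.of k (FreeMonoid X)) '' F) ↔
    ∃ f ∈ F, ∃ u v : FreeMonoid X, w = u * f * v :=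
  monomial_mem_twoSidedIdeal_span_iff_factor_general k X F w
end

section
/- Let X be a finite alphabet, F a set of words over X each of length at least 1, k a field, and A = k⟨X⟩/I(F) the associated monomial algebra. Then the images in A of the legal words (the words having no element of F as a contiguous factor) form a k-vector space basis of A. -/
/-- A word is *legal* (with respect to the set of forbidden words `F`) if no element of `F`
is a contiguous factor of it. -/
def MonomialLegal {X : Type*} (F : Set (FreeMonoid X)) (w : FreeMonoid X) : Prop :=
  ∀ f ∈ F, ∀ u v : FreeMonoid X, w ≠ u * f * v

/-- The defining relation of the monomial algebra `A = k⟨X⟩/I(F)`: each forbidden word is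
identified with `0`, so that `RingQuot` of this relation is the quotient of
`k⟨X⟩ = MonoidAlgebra k (FreeMonoid X)` by the two-sided ideal generated by the words of `F`. -/
def monomialRel (k X : Type*) [Field k] (F : Set (FreeMonoid X)) :
    MonoidAlgebra k (FreeMonoid X) → MonoidAlgebra k (FreeMonoid X) → Prop :=
  fun a b => b = 0 ∧ ∃ f ∈ F, a = MonoidAlgebra.of k (FreeMonoid X) f

/-!
The legal words span `A`, because every illegal word contains a forbidden factor and so maps
to `0`. For independence, let `k⟨X⟩` act on the space with basis the legal words, a word `u`
sending `w` to `u w` when `u w` is legal and to `0` otherwise. Forbidden words act by `0`, so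
this is a representation of `A`, and applying the image of a legal word `w` to the empty word
(legal as soon as any word is) gives back `w`.
-/

namespace MonomialLegal

variable {X : Type*} {F : Set (FreeMonoid X)}

theorem of_mul_mul {a w b : FreeMonoid X} (h : MonomialLegal F (a * w * b)) :
    MonomialLegal F w := fun f hf u v hw =>
  h f hf (a * u) (v * b) (by simp only [hw, mul_assoc])

theorem of_mul_left {a w : FreeMonoid X} (h : MonomialLegal F (a * w)) : MonomialLegal F w :=
  of_mul_mul (b := 1) (by rwa [mul_one])

theorem of_mul_right {w b : FreeMonoid X} (h : MonomialLegal F (w * b)) : MonomialLegal F w :=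
  of_mul_mul (a := 1) (by rwa [one_mul])

theorem one {w : FreeMonoid X} (h : MonomialLegal F w) : MonomialLegal F 1 :=
  of_mul_mul (a := w) (b := 1) (by rwa [mul_one, mul_one])

theorem not_of_mem {f : FreeMonoid X} (hf : f ∈ F) : ¬ MonomialLegal F f := fun h =>
  h f hf 1 1 (by rw [one_mul, mul_one])

end MonomialLegal

section LegalRepresentation

variable (k : Type*) {X : Type*} [Field k] (F : Set (FreeMonoid X))

open Classical in
noncomputable def legalLeftMul (u : FreeMonoid X) :
    Module.End k ({w : FreeMonoid X // MonomialLegal F w} →₀ k) :=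
  Finsupp.lsum k fun w => if h : MonomialLegal F (u * w.1) then
    Finsupp.lsingle ⟨u * w.1, h⟩ else 0

variable {k F}

theorem legalLeftMul_single_of_legal {u : FreeMonoid X} {w : {w // MonomialLegal F w}}
    (h : MonomialLegal F (u * w.1)) (c : k) :
    legalLeftMul k F u (Finsupp.single w c) = Finsupp.single ⟨u * w.1, h⟩ c := by
  simp [legalLeftMul, h]

theorem legalLeftMul_single_of_not_legal {u : FreeMonoid X} {w : {w // MonomialLegal F w}}
    (h : ¬ MonomialLegal F (u * w.1)) (c : k) :
    legalLeftMul k F u (Finsupp.single w c) = 0 := by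
  simp [legalLeftMul, h]

variable (k F)

noncomputable def legalLeftMulHom :
    FreeMonoid X →* Module.End k ({w : FreeMonoid X // MonomialLegal F w} →₀ k) where
  toFun := legalLeftMul k F
  map_one' := Finsupp.lhom_ext fun w c => by
    rw [legalLeftMul_single_of_legal (by rw [one_mul]; exact w.2)]
    simp only [one_mul, Subtype.coe_eta, Module.End.one_apply]
  map_mul' u v := Finsupp.lhom_ext fun w c => by
    rw [Module.End.mul_apply]
    by_cases hv : MonomialLegal F (v * w.1)
    · rw [legalLeftMul_single_of_legal hv]
      set vw : {w // MonomialLegal F w} := ⟨v * w.1, hv⟩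
      by_cases huv : MonomialLegal F (u * vw.1)
      · rw [legalLeftMul_single_of_legal (w := vw) huv,
          legalLeftMul_single_of_legal (u := u * v) (by rwa [mul_assoc])]
        simp only [vw, mul_assoc]
      · rw [legalLeftMul_single_of_not_legal (w := vw) huv,
          legalLeftMul_single_of_not_legal (u := u * v) (by rwa [mul_assoc])]
    · rw [legalLeftMul_single_of_not_legal hv, map_zero,
        legalLeftMul_single_of_not_legal (by rw [mul_assoc]; exact fun h => hv h.of_mul_left)]

noncomputable def legalRep :
    RingQuot (monomialRel k X F) →ₐ[k]
      Module.End k ({w : FreeMonoid X // MonomialLegal F w} →₀ k) :=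
  RingQuot.liftAlgHom k ⟨MonoidAlgebra.lift k _ _ (legalLeftMulHom k F), by
    rintro _ _ ⟨rfl, f, hf, rfl⟩
    rw [MonoidAlgebra.lift_of, map_zero]
    exact Finsupp.lhom_ext fun w c =>
      legalLeftMul_single_of_not_legal (fun h => MonomialLegal.not_of_mem hf h.of_mul_right) c⟩

end LegalRepresentation

section MonomialAlgebra

variable (k : Type*) {X : Type*} [Field k] (F : Set (FreeMonoid X))

theorem mkAlgHom_of_eq_zero_of_not_legal {w : FreeMonoid X} (hw : ¬ MonomialLegal F w) :
    RingQuot.mkAlgHom k (monomialRel k X F) (MonoidAlgebra.of k _ w) = 0 := by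
  simp only [MonomialLegal, not_forall, not_not] at hw
  obtain ⟨f, hf, u, v, rfl⟩ := hw
  have hf0 : RingQuot.mkAlgHom k (monomialRel k X F) (MonoidAlgebra.of k _ f) = 0 := by
    simpa using RingQuot.mkAlgHom_rel k (s := monomialRel k X F) ⟨rfl, f, hf, rfl⟩
  simp only [map_mul, hf0, mul_zero, zero_mul]

theorem span_mkAlgHom_of_legal :
    Submodule.span k (Set.range fun w : {w : FreeMonoid X // MonomialLegal F w} =>
      RingQuot.mkAlgHom k (monomialRel k X F) (MonoidAlgebra.of k _ w.1)) = ⊤ := by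
  let mk := (RingQuot.mkAlgHom k (monomialRel k X F)).toLinearMap
  rw [eq_top_iff, ← (LinearMap.range_eq_top (f := mk)).2 (RingQuot.mkAlgHom_surjective k _),
    LinearMap.range_eq_map, ← (MonoidAlgebra.basis (FreeMonoid X) k).span_eq,
    Submodule.map_span, Submodule.span_le]
  rintro _ ⟨_, ⟨w, rfl⟩, rfl⟩
  rw [MonoidAlgebra.basis_apply, ← MonoidAlgebra.of_apply]
  by_cases hw : MonomialLegal F w
  · exact Submodule.subset_span ⟨⟨w, hw⟩, rfl⟩
  · rw [AlgHom.toLinearMap_apply, mkAlgHom_of_eq_zero_of_not_legal k F hw]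
    exact Submodule.zero_mem _

theorem legalRep_mkAlgHom_of_apply_single_one {w : FreeMonoid X} (hw : MonomialLegal F w) :
    legalRep k F (RingQuot.mkAlgHom k (monomialRel k X F) (MonoidAlgebra.of k _ w))
      (Finsupp.single ⟨1, hw.one⟩ 1) = Finsupp.single ⟨w, hw⟩ 1 := by
  rw [legalRep, RingQuot.liftAlgHom_mkAlgHom_apply, MonoidAlgebra.lift_of]
  exact legalLeftMul_single_of_legal (by rwa [mul_one]) 1 |>.trans (by simp only [mul_one])

theorem linearIndependent_mkAlgHom_of_legal :
    LinearIndependent k fun w : {w : FreeMonoid X // MonomialLegal F w} =>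
      RingQuot.mkAlgHom k (monomialRel k X F) (MonoidAlgebra.of k _ w.1) := by
  rcases isEmpty_or_nonempty {w : FreeMonoid X // MonomialLegal F w} with _ | ⟨⟨w₀, hw₀⟩⟩
  · exact linearIndependent_empty_type
  · let V := {w : FreeMonoid X // MonomialLegal F w} →₀ k
    let evalEmptyWord :=
      LinearMap.applyₗ (R := k) (M := V) (M₂ := V) (Finsupp.single ⟨1, hw₀.one⟩ 1)
    refine LinearIndependent.of_comp (evalEmptyWord ∘ₗ (legalRep k F).toLinearMap) ?_
    convert (Finsupp.basisSingleOne (R := k)).linearIndependent using 1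
    ext1 w
    exact (legalRep_mkAlgHom_of_apply_single_one k F w.2).trans
      (congrFun Finsupp.coe_basisSingleOne w).symm

end MonomialAlgebra

theorem exists_basis_of_legal_words_general
    (k X : Type*) [Field k] (F : Set (FreeMonoid X)) :
    ∃ b : Module.Basis {w : FreeMonoid X // MonomialLegal F w} k
        (RingQuot (monomialRel k X F)),
      ∀ w : {w : FreeMonoid X // MonomialLegal F w},
        b w = RingQuot.mkAlgHom k (monomialRel k X F)
          (MonoidAlgebra.of k (FreeMonoid X) w.1) :=
  ⟨.mk (linearIndependent_mkAlgHom_of_legal k F) (span_mkAlgHom_of_legal k F).ge,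
    fun _ => Module.Basis.mk_apply _ _ _⟩

/-- The images in the monomial algebra `A = k⟨X⟩/I(F)` of the legal words form a
`k`-vector space basis of `A`. -/
theorem exists_basis_of_legal_words
    (k X : Type*) [Field k] [Fintype X] (F : Set (FreeMonoid X))
    (hF : ∀ f ∈ F, 1 ≤ FreeMonoid.length f) :
    ∃ b : Module.Basis {w : FreeMonoid X // MonomialLegal F w} k
        (RingQuot (monomialRel k X F)),
      ∀ w : {w : FreeMonoid X // MonomialLegal F w},
        b w = RingQuot.mkAlgHom k (monomialRel k X F)
          (MonoidAlgebra.of k (FreeMonoid X) w.1) :=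
  exists_basis_of_legal_words_general k X F
end

section
/- Let X be a finite alphabet, F a finite set of words over X each of length at least 1, k a field, and A = k⟨X⟩/I(F) the monomial algebra, with A_n the k-subspace of A spanned by images of words of length n. Assume L_n is nonempty for every n ≥ 1. Then the topological entropy of the associated subshift equals the binary logarithm of the algebraic entropy of A: limsup_{n→∞} (1/n)·log₂ |L_n| = log₂ ( limsup_{n→∞} (dim_k A_n)^{1/n} ), and both limsups are taken over the real sequences indicated. -/
/-!
The images in `A` of the illegal words vanish, while the images of the legal words are linearly
independent: `A` acts on the `k`-span of the legal words by left multiplication (illegal products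
being sent to `0`), and acting on the empty word recovers each legal word. Hence
`dim_k A_n = |L_n|`, and the identity reduces to the fact that `logb 2` is continuous and
monotone on `[1, ∞)`, so it commutes with the limsup of the bounded sequence `|L_n|^(1/n)`.
-/

theorem MonomialLegal.of_factor {X : Type*} {F : Set (FreeMonoid X)} {u w v : FreeMonoid X}
    (h : MonomialLegal F (u * w * v)) : MonomialLegal F w := by
  rintro f hf a b rfl
  exact h f hf (u * a) (b * v) (by simp only [mul_assoc])

theorem MonomialLegal.one_s5 {X : Type*} {F : Set (FreeMonoid X)} {w : FreeMonoid X}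
    (h : MonomialLegal F w) : MonomialLegal F 1 :=
  MonomialLegal.of_factor (u := w) (v := 1) (by rwa [mul_one, mul_one])

namespace FreeMonoid

variable {X : Type*}

def lengthEqEquivVector (n : ℕ) : {w : FreeMonoid X // w.length = n} ≃ List.Vector X n :=
  toList.subtypeEquiv fun _ => Iff.rfl

instance [Finite X] (n : ℕ) : Finite {w : FreeMonoid X // w.length = n} :=
  Finite.of_equiv _ (lengthEqEquivVector n).symm

instance [Finite X] (n : ℕ) (p : FreeMonoid X → Prop) :
    Finite {w : FreeMonoid X // w.length = n ∧ p w} :=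
  Finite.of_injective _ (Subtype.impEmbedding _ _ fun _ => And.left).injective

theorem natCard_length_eq [Fintype X] (n : ℕ) :
    Nat.card {w : FreeMonoid X // w.length = n} = Fintype.card X ^ n := by
  rw [Nat.card_congr (lengthEqEquivVector n), Nat.card_eq_fintype_card, card_vector]

theorem natCard_length_eq_and_le [Fintype X] (n : ℕ) (p : FreeMonoid X → Prop) :
    Nat.card {w : FreeMonoid X // w.length = n ∧ p w} ≤ Fintype.card X ^ n :=
  natCard_length_eq (X := X) n ▸
    Nat.card_le_card_of_injective _ (Subtype.impEmbedding _ _ fun _ => And.left).injective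

end FreeMonoid

namespace MonomialAlgebra

open scoped Classical

variable (k : Type*) {X : Type*} [Field k] (F : Set (FreeMonoid X))

abbrev LegalWord : Type _ := {w : FreeMonoid X // MonomialLegal F w}

noncomputable def legalMul (w : FreeMonoid X) : Module.End k (LegalWord F →₀ k) :=
  Finsupp.lift _ k _ fun m =>
    if h : MonomialLegal F (w * m.1) then Finsupp.single ⟨w * m.1, h⟩ 1 else 0

variable {k F}

theorem legalMul_single (w : FreeMonoid X) (m : LegalWord F) :
    legalMul k F w (Finsupp.single m 1) =
      if h : MonomialLegal F (w * m.1) then Finsupp.single ⟨w * m.1, h⟩ 1 else 0 := by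
  simp [legalMul]

variable (k F)

noncomputable def legalMulHom : FreeMonoid X →* Module.End k (LegalWord F →₀ k) where
  toFun := legalMul k F
  map_one' := by
    refine Finsupp.lhom_ext' fun m => LinearMap.ext_ring ?_
    simp [legalMul_single, one_mul, m.2]
  map_mul' u v := by
    refine Finsupp.lhom_ext' fun m => LinearMap.ext_ring ?_
    simp only [LinearMap.comp_apply, Finsupp.lsingle_apply, Module.End.mul_apply, legalMul_single]
    by_cases hv : MonomialLegal F (v * m.1)
    · simp [hv, legalMul_single, mul_assoc]
    · have huv : ¬MonomialLegal F (u * v * m.1) := fun h =>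
        hv (MonomialLegal.of_factor (u := u) (v := 1) (by simpa [mul_assoc] using h))
      simp [hv, huv]

noncomputable def legalRep :
    RingQuot (monomialRel k X F) →ₐ[k] Module.End k (LegalWord F →₀ k) :=
  RingQuot.liftAlgHom k ⟨MonoidAlgebra.lift k _ (FreeMonoid X) (legalMulHom k F), by
    rintro _ _ ⟨rfl, f, hf, rfl⟩
    rw [MonoidAlgebra.lift_of, map_zero]
    refine Finsupp.lhom_ext' fun m => LinearMap.ext_ring ?_
    simp only [LinearMap.comp_apply, Finsupp.lsingle_apply, LinearMap.zero_apply]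
    show legalMul k F f (Finsupp.single m 1) = 0
    rw [legalMul_single, dif_neg fun h => h f hf 1 m.1 (one_mul _).symm]⟩

variable {k F}

theorem legalRep_mk_of (w : FreeMonoid X) :
    legalRep k F (RingQuot.mkAlgHom k (monomialRel k X F) (MonoidAlgebra.of k _ w)) =
      legalMul k F w := by
  simp [legalRep, legalMulHom]

theorem mkAlgHom_of_eq_zero_of_not_legal {w : FreeMonoid X} (hw : ¬MonomialLegal F w) :
    RingQuot.mkAlgHom k (monomialRel k X F) (MonoidAlgebra.of k _ w) = 0 := by
  obtain ⟨f, hf, u, v, rfl⟩ : ∃ f ∈ F, ∃ u v, w = u * f * v := by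
    simpa [MonomialLegal] using hw
  have hf0 : RingQuot.mkAlgHom k (monomialRel k X F) (MonoidAlgebra.of k _ f) = 0 :=
    (RingQuot.mkAlgHom_rel k ⟨rfl, f, hf, rfl⟩).trans (map_zero _)
  rw [map_mul, map_mul, map_mul, map_mul, hf0, mul_zero, zero_mul]

theorem linearIndependent_mkAlgHom_of_legal (h1 : MonomialLegal F 1) :
    LinearIndependent k fun w : LegalWord F =>
      RingQuot.mkAlgHom k (monomialRel k X F) (MonoidAlgebra.of k _ w.1) := by
  let ev : Module.End k (LegalWord F →₀ k) →ₗ[k] LegalWord F →₀ k :=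
    LinearMap.applyₗ (Finsupp.single ⟨1, h1⟩ 1)
  refine LinearIndependent.of_comp (ev ∘ₗ (legalRep k F).toLinearMap) ?_
  convert (Finsupp.basisSingleOne (R := k) (ι := LegalWord F)).linearIndependent using 1
  funext w
  simp only [Function.comp_apply, ev, LinearMap.coe_comp, AlgHom.toLinearMap_apply, legalRep_mk_of]
  simp [legalMul_single, w.2]

theorem finrank_span_mkAlgHom_length_eq [Finite X] (h1 : MonomialLegal F 1) (n : ℕ) :
    Module.finrank k (Submodule.span k (Set.range
      fun w : {w : FreeMonoid X // w.length = n} =>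
        RingQuot.mkAlgHom k (monomialRel k X F) (MonoidAlgebra.of k _ w.1))) =
      Nat.card {w : FreeMonoid X // w.length = n ∧ MonomialLegal F w} := by
  have hspan : Submodule.span k (Set.range
      fun w : {w : FreeMonoid X // w.length = n} =>
        RingQuot.mkAlgHom k (monomialRel k X F) (MonoidAlgebra.of k _ w.1)) =
      Submodule.span k (Set.range
        fun w : {w : FreeMonoid X // w.length = n ∧ MonomialLegal F w} =>
          RingQuot.mkAlgHom k (monomialRel k X F) (MonoidAlgebra.of k _ w.1)) := by
    refine le_antisymm (Submodule.span_le.2 ?_) (Submodule.span_mono ?_)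
    · rintro _ ⟨⟨w, hn⟩, rfl⟩
      by_cases hw : MonomialLegal F w
      · exact Submodule.subset_span ⟨⟨w, hn, hw⟩, rfl⟩
      · simp only [mkAlgHom_of_eq_zero_of_not_legal hw, SetLike.mem_coe, Submodule.zero_mem]
    · rintro _ ⟨w, rfl⟩
      exact ⟨⟨w.1, w.2.1⟩, rfl⟩
  have hli := (linearIndependent_mkAlgHom_of_legal (k := k) h1).comp _
    (Subtype.impEmbedding (fun w => w.length = n ∧ MonomialLegal F w) _
      fun _ => And.right).injective
  have := Fintype.ofFinite {w : FreeMonoid X // w.length = n ∧ MonomialLegal F w}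
  rw [hspan, Nat.card_eq_fintype_card]
  exact finrank_span_eq_card hli

end MonomialAlgebra

open Filter

theorem Real.logb_limsup_eq_limsup_logb {ι : Type*} {l : Filter ι} [l.NeBot] {b c : ℝ}
    (hb : 1 < b) (hc : 0 < c) {g : ι → ℝ} (hcg : ∀ i, c ≤ g i)
    (hg : IsBoundedUnder (· ≤ ·) l g) :
    Real.logb b (limsup g l) = limsup (fun i => Real.logb b (g i)) l := by
  have hc_le : c ≤ limsup g l := le_limsup_of_frequently_le (.of_forall hcg) hg
  -- `logb b` is monotone only on the positive reals, so clamp its argument at `c`.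
  set φ : ℝ → ℝ := fun x => Real.logb b (max c x)
  have hφ_mono : Monotone φ := fun x y hxy =>
    Real.logb_le_logb_of_le hb (hc.trans_le (le_max_left c x)) (max_le_max le_rfl hxy)
  have hφ_cont : Continuous φ :=
    (continuous_const.max continuous_id).logb fun x => (hc.trans_le (le_max_left c x)).ne'
  have key := hφ_mono.map_limsup_of_continuousAt g hφ_cont.continuousAt hg
    (isBoundedUnder_of ⟨c, hcg⟩).isCoboundedUnder_le
  simpa [φ, Function.comp_def, max_eq_right hc_le, max_eq_right (hcg _)] using key

theorem limsup_one_div_mul_logb_eq_logb_limsup_rpow {a : ℕ → ℝ} {b C : ℝ} (hb : 1 < b)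
    (ha : ∀ n, 1 ≤ a n) (haC : ∀ n, a n ≤ C ^ n) :
    limsup (fun n : ℕ => (1 / (n : ℝ)) * Real.logb b (a n)) atTop =
      Real.logb b (limsup (fun n : ℕ => a n ^ (1 / (n : ℝ))) atTop) := by
  have hC : 1 ≤ C := by simpa using (ha 1).trans (haC 1)
  have hroot_ge (n : ℕ) : 1 ≤ a n ^ (1 / (n : ℝ)) :=
    Real.one_le_rpow (ha n) (by positivity)
  have hroot_le (n : ℕ) : a n ^ (1 / (n : ℝ)) ≤ C := by
    rcases n.eq_zero_or_pos with rfl | hn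
    · simpa using hC
    · calc a n ^ (1 / (n : ℝ)) ≤ (C ^ n) ^ (1 / (n : ℝ)) :=
            Real.rpow_le_rpow (by linarith [ha n]) (haC n) (by positivity)
        _ = C := by rw [one_div, Real.pow_rpow_inv_natCast (by linarith) hn.ne']
  rw [Real.logb_limsup_eq_limsup_logb hb one_pos hroot_ge (isBoundedUnder_of ⟨C, hroot_le⟩)]
  congr 1
  funext n
  rw [Real.logb_rpow_eq_mul_logb_of_pos (by linarith [ha n])]

open MonomialAlgebra in
theorem topological_entropy_eq_logb_algebraic_entropy_general
    (k X : Type*) [Field k] [Fintype X] (F : Finset (FreeMonoid X))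
    (hne : ∀ n : ℕ, 1 ≤ n →
      ∃ w : FreeMonoid X, FreeMonoid.length w = n ∧ MonomialLegal (↑F) w) :
    Filter.limsup
      (fun n : ℕ => (1 / (n : ℝ)) *
        Real.logb 2
          (Nat.card {w : FreeMonoid X // FreeMonoid.length w = n ∧ MonomialLegal (↑F) w}))
      Filter.atTop =
    Real.logb 2
      (Filter.limsup
        (fun n : ℕ =>
          ((Module.finrank k
            ↥(Submodule.span k
              (Set.range
                (fun w : {w : FreeMonoid X // FreeMonoid.length w = n} =>
                  RingQuot.mkAlgHom k (monomialRel k X ↑F)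
                    (MonoidAlgebra.of k (FreeMonoid X) w.1)))) : ℝ) ^ (1 / (n : ℝ))))
        Filter.atTop) := by
  obtain ⟨w₁, -, hw₁⟩ := hne 1 le_rfl
  have h1 := hw₁.one_s5
  have hL_nonempty (n : ℕ) :
      Nonempty {w : FreeMonoid X // FreeMonoid.length w = n ∧ MonomialLegal (↑F) w} := by
    rcases n.eq_zero_or_pos with rfl | hn
    · exact ⟨⟨1, rfl, h1⟩⟩
    · obtain ⟨w, hw⟩ := hne n hn
      exact ⟨⟨w, hw⟩⟩
  simp only [finrank_span_mkAlgHom_length_eq h1]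
  exact limsup_one_div_mul_logb_eq_logb_limsup_rpow (C := Fintype.card X) one_lt_two
    (fun n => Nat.one_le_cast.2 (@Nat.card_pos _ (hL_nonempty n) _))
    (fun n => mod_cast FreeMonoid.natCard_length_eq_and_le n _)

/-- The topological entropy of the subshift associated to the finitely presented monomial
algebra `A = k⟨X⟩/I(F)` (namely `limsup (1/n) log₂ |L_n|`, where `L_n` is the set of legal
words of length `n`) equals the binary logarithm of the algebraic entropy of `A`
(namely `limsup (dim_k A_n)^(1/n)`, where `A_n` is the span of the images of the words of
length `n`). -/
theorem topological_entropy_eq_logb_algebraic_entropy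
    (k X : Type*) [Field k] [Fintype X] (F : Finset (FreeMonoid X))
    (hF : ∀ f ∈ F, 1 ≤ FreeMonoid.length f)
    (hne : ∀ n : ℕ, 1 ≤ n →
      ∃ w : FreeMonoid X, FreeMonoid.length w = n ∧ MonomialLegal (↑F) w) :
    Filter.limsup
      (fun n : ℕ => (1 / (n : ℝ)) *
        Real.logb 2
          (Nat.card {w : FreeMonoid X // FreeMonoid.length w = n ∧ MonomialLegal (↑F) w}))
      Filter.atTop =
    Real.logb 2
      (Filter.limsup
        (fun n : ℕ =>
          ((Module.finrank k
            ↥(Submodule.span k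
              (Set.range
                (fun w : {w : FreeMonoid X // FreeMonoid.length w = n} =>
                  RingQuot.mkAlgHom k (monomialRel k X ↑F)
                    (MonoidAlgebra.of k (FreeMonoid X) w.1)))) : ℝ) ^ (1 / (n : ℝ))))
        Filter.atTop) :=
  topological_entropy_eq_logb_algebraic_entropy_general k X F hne
end

section
/- Let X be a finite alphabet and F a finite nonempty set of words over X, each of length at least 2; let l + 1 be the maximal length of a word of F. For every m > l, the map sending a legal word w of length m to the sequence of its m − l contiguous factors of length l + 1 (in order) is a bijection from L_m onto the set of paths of length m − l in the Ufnarovski graph, i.e. onto the set of sequences (w_1, …, w_{m−l}) of legal words of length l + 1 such that for each i the length-l suffix of w_i equals the length-l prefix of w_{i+1}. In particular |L_m| equals the number of paths of length m − l in the Ufnarovski graph. -/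
/-- A word is *legal* (with respect to the set of forbidden words `F`) if no element of `F`
is a contiguous factor of it. -/
def ListLegal {X : Type*} (F : Set (List X)) (w : List X) : Prop :=
  ∀ f ∈ F, ∀ u v : List X, w ≠ u ++ f ++ v

namespace UfnAux

variable {X : Type*}

lemma factor_getElem? (w : List X) (L i j : ℕ) (hj : j < L) :
    ((w.drop i).take L)[j]? = w[i + j]? := by
  rw [List.getElem?_take_of_lt hj, List.getElem?_drop]

lemma chain {l n : ℕ} (seq : Fin n → List X)
    (hcomp : ∀ (i : Fin n) (h : (i : ℕ) + 1 < n),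
      (seq i).drop 1 = (seq ⟨(i : ℕ) + 1, h⟩).take l) :
    ∀ d i j, ∀ (hi : i + d < n), j + d < l + 1 →
      (seq ⟨i, by omega⟩)[j + d]? = (seq ⟨i + d, hi⟩)[j]? := by
  intro d
  induction d with
  | zero => intro i j hi hj; rfl
  | succ d ih =>
    intro i j hi hj
    have h1 : i + 1 < n := by omega
    have step := hcomp ⟨i, by omega⟩ h1
    have e1 : (seq ⟨i, by omega⟩)[1 + (j + d)]? = (seq ⟨i + 1, h1⟩)[j + d]? := by
      rw [← List.getElem?_drop, step, List.getElem?_take_of_lt (by omega)]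
    have e2 : 1 + (j + d) = j + (d + 1) := by omega
    rw [e2] at e1
    rw [e1, ih (i + 1) j (by omega) (by omega)]
    exact congrArg (fun t => (seq t)[_]?) (Fin.ext (by simp only [Fin.val_mk]; omega))

def glue (l n : ℕ) (hn : 1 ≤ n) (seq : Fin n → List X)
    (hlen : ∀ i, (seq i).length = l + 1) : List X :=
  List.ofFn fun k : Fin (n + l) =>
    (seq ⟨min (k : ℕ) (n - 1), by omega⟩)[(k : ℕ) - min (k : ℕ) (n - 1)]'
      (by have := k.isLt; rw [hlen]; omega)

lemma glue_length (l n : ℕ) (hn : 1 ≤ n) (seq : Fin n → List X)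
    (hlen : ∀ i, (seq i).length = l + 1) :
    (glue l n hn seq hlen).length = n + l := by
  simp [glue]

lemma glue_getElem? (l n : ℕ) (hn : 1 ≤ n) (seq : Fin n → List X)
    (hlen : ∀ i, (seq i).length = l + 1) (k : ℕ) (hk : k < n + l) :
    (glue l n hn seq hlen)[k]? =
      (seq ⟨min k (n - 1), by omega⟩)[k - min k (n - 1)]? := by
  rw [List.getElem?_eq_getElem (by rw [glue_length]; omega),
    List.getElem?_eq_getElem (by rw [hlen]; omega)]
  simp [glue]

lemma glue_factor (l n : ℕ) (hn : 1 ≤ n) (seq : Fin n → List X)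
    (hlen : ∀ i, (seq i).length = l + 1)
    (hcomp : ∀ (i : Fin n) (h : (i : ℕ) + 1 < n),
      (seq i).drop 1 = (seq ⟨(i : ℕ) + 1, h⟩).take l)
    (i : ℕ) (hi : i < n) :
    ((glue l n hn seq hlen).drop i).take (l + 1) = seq ⟨i, hi⟩ := by
  apply List.ext_getElem?
  intro j
  by_cases hj : j < l + 1
  · have hij : i + j < n + l := by omega
    rw [factor_getElem? _ _ _ _ hj, glue_getElem? l n hn seq hlen _ hij]
    have hd : i ≤ min (i + j) (n - 1) := by omega
    obtain ⟨d, hd2⟩ : ∃ d, min (i + j) (n - 1) = i + d := ⟨_, (Nat.add_sub_cancel' hd).symm⟩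
    have h2 : i + d < n := by omega
    have h3 : i + j - min (i + j) (n - 1) + d = j := by omega
    have key := chain seq hcomp d i (i + j - min (i + j) (n - 1)) h2 (by omega)
    rw [h3] at key
    rw [key]
    exact congrArg (fun t => (seq t)[_]?) (Fin.ext (by simp only [Fin.val_mk]; omega))
  · rw [List.getElem?_take_eq_none (by omega),
      List.getElem?_eq_none (by rw [hlen]; omega)]

lemma glue_legal (F : Set (List X)) (l n : ℕ) (hn : 1 ≤ n) (seq : Fin n → List X)
    (hlen : ∀ i, (seq i).length = l + 1)
    (hlegal : ∀ i, ListLegal F (seq i))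
    (hFle : ∀ f ∈ F, f.length ≤ l + 1)
    (hcomp : ∀ (i : Fin n) (h : (i : ℕ) + 1 < n),
      (seq i).drop 1 = (seq ⟨(i : ℕ) + 1, h⟩).take l) :
    ListLegal F (glue l n hn seq hlen) := by
  intro f hf u v heq
  have hulen : u.length + f.length + v.length = n + l := by
    have := congrArg List.length heq
    rw [glue_length] at this
    simp at this
    omega
  have hfle := hFle f hf
  set i := min u.length (n - 1) with hidef
  have hi : i < n := by omega
  have key := glue_factor l n hn seq hlen hcomp i hi
  have hcompute : ((glue l n hn seq hlen).drop i).take (l + 1) =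
      u.drop i ++ f ++ v.take (l + 1 - (u.length - i + f.length)) := by
    rw [heq, List.append_assoc, List.drop_append_of_le_length (by omega),
      ← List.append_assoc, List.take_append,
      List.take_of_length_le (by simp; omega)]
    simp
  exact hlegal ⟨i, hi⟩ f hf _ _ (key.symm.trans hcompute)

end UfnAux

open UfnAux in
/-- Let `F` be a finite nonempty set of forbidden words, each of length at least `2`, with
`l + 1` the maximal length of a word of `F`.  For `m > l`, the map sending a legal word `w` of
length `m` to the sequence of its `m - l` contiguous factors of length `l + 1` is a bijection
from `L_m` onto the set of paths of length `m - l` in the Ufnarovski graph, i.e. onto the set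
of sequences of legal words of length `l + 1` in which the length-`l` suffix of each term
equals the length-`l` prefix of the next.  In particular `|L_m|` equals the number of such
paths. -/
theorem legal_words_bijOn_ufnarovski_paths
    (X : Type*) [Fintype X] (F : Finset (List X)) (l : ℕ)
    (hF2 : ∀ f ∈ F, 2 ≤ f.length) (hFle : ∀ f ∈ F, f.length ≤ l + 1)
    (hFmax : ∃ f ∈ F, f.length = l + 1)
    (m : ℕ) (hm : l < m) :
    Set.BijOn (fun (w : List X) (i : Fin (m - l)) => (w.drop (i : ℕ)).take (l + 1))
      {w : List X | w.length = m ∧ ListLegal (↑F) w}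
      {seq : Fin (m - l) → List X |
        (∀ i, (seq i).length = l + 1 ∧ ListLegal (↑F) (seq i)) ∧
        ∀ (i : Fin (m - l)) (h : (i : ℕ) + 1 < m - l),
          (seq i).drop 1 = (seq ⟨(i : ℕ) + 1, h⟩).take l} ∧
    Nat.card {w : List X // w.length = m ∧ ListLegal (↑F) w} =
      Nat.card {seq : Fin (m - l) → List X //
        (∀ i, (seq i).length = l + 1 ∧ ListLegal (↑F) (seq i)) ∧
        ∀ (i : Fin (m - l)) (h : (i : ℕ) + 1 < m - l),
          (seq i).drop 1 = (seq ⟨(i : ℕ) + 1, h⟩).take l} := by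
  have hmn : m = (m - l) + l := (Nat.sub_add_cancel hm.le).symm
  set n := m - l with hndef
  have hn : 1 ≤ n := by omega
  have hbij : Set.BijOn (fun (w : List X) (i : Fin n) => (w.drop (i : ℕ)).take (l + 1))
      {w : List X | w.length = m ∧ ListLegal (↑F) w}
      {seq : Fin n → List X |
        (∀ i, (seq i).length = l + 1 ∧ ListLegal (↑F) (seq i)) ∧
        ∀ (i : Fin n) (h : (i : ℕ) + 1 < n),
          (seq i).drop 1 = (seq ⟨(i : ℕ) + 1, h⟩).take l} := by
    refine ⟨?_, ?_, ?_⟩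
    · -- MapsTo
      rintro w ⟨hwlen, hwleg⟩
      refine ⟨fun i => ⟨?_, ?_⟩, ?_⟩
      · have := i.isLt
        simp only [List.length_take, List.length_drop, hwlen]
        omega
      · intro f hf u v heq
        replace heq : (w.drop (i : ℕ)).take (l + 1) = u ++ f ++ v := heq
        refine hwleg f hf (w.take (i : ℕ) ++ u) (v ++ w.drop ((i : ℕ) + (l + 1))) ?_
        calc w = w.take (i : ℕ) ++ w.drop (i : ℕ) := (List.take_append_drop _ w).symm
          _ = w.take (i : ℕ) ++ ((w.drop (i : ℕ)).take (l + 1) ++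
                (w.drop (i : ℕ)).drop (l + 1)) := by
                rw [List.take_append_drop (l + 1) (w.drop (i : ℕ)),
                  List.take_append_drop (i : ℕ) w]
          _ = w.take (i : ℕ) ++ ((u ++ f ++ v) ++ w.drop ((i : ℕ) + (l + 1))) := by
                rw [heq, List.drop_drop]
          _ = (w.take (i : ℕ) ++ u) ++ f ++ (v ++ w.drop ((i : ℕ) + (l + 1))) := by
                simp [List.append_assoc]
      · intro i h
        simp only [List.drop_take, List.take_take]
        rw [List.drop_drop]
        norm_num [Nat.add_comm]
    · -- InjOn
      rintro w ⟨hwlen, _⟩ w' ⟨hwlen', _⟩ heq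
      apply List.ext_getElem?
      intro k
      by_cases hk : k < m
      · have hi : min k (n - 1) < n := by omega
        have hj : k - min k (n - 1) < l + 1 := by omega
        have e := congrFun heq ⟨min k (n - 1), hi⟩
        have e1 := congrArg (fun t : List X => t[k - min k (n - 1)]?) e
        simp only at e1
        rw [factor_getElem? _ _ _ _ hj, factor_getElem? _ _ _ _ hj] at e1
        have : min k (n - 1) + (k - min k (n - 1)) = k := by omega
        rwa [this] at e1
      · rw [List.getElem?_eq_none (by omega), List.getElem?_eq_none (by omega)]
    · -- SurjOn
      rintro seq ⟨h1, h2⟩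
      have hlen : ∀ i, (seq i).length = l + 1 := fun i => (h1 i).1
      refine ⟨glue l n hn seq hlen, ⟨(glue_length l n hn seq hlen).trans hmn.symm, ?_⟩, ?_⟩
      · exact glue_legal (↑F) l n hn seq hlen (fun i => (h1 i).2) hFle h2
      · funext i
        exact glue_factor l n hn seq hlen h2 (i : ℕ) i.isLt
  exact ⟨hbij, Nat.card_congr (hbij.equiv _)⟩
end

section
/- Let X be a finite alphabet and F a finite nonempty set of words over X, each of length at least 2, with l + 1 the maximal length of a word of F. Let p_n denote the number of paths of length n in the Ufnarovski graph. Then limsup_{m→∞} |L_m|^{1/m} = limsup_{n→∞} (p_n)^{1/n}; i.e. the algebraic entropy of the monomial algebra A = k⟨X⟩/I(F) equals the algebraic entropy of the path algebra of its Ufnarovski graph. -/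
/-!
A legal word of length `n + l` is the same thing as a path of length `n` in the Ufnarovski
graph, read off through its `n` windows of length `l + 1`: the windows of a legal word are
legal factors, and conversely every forbidden word has length at most `l + 1`, so it would
sit inside one of the windows. Hence `p_n = |L_{n+l}|` for `n ≥ 1`, and
`p_n ^ (1/n) = (|L_{n+l}| ^ (1/(n+l))) ^ ((n+l)/n)`. The roots `|L_m| ^ (1/m)` stay in
`[0, |X| + 1]`, where `x ↦ x ^ e` tends uniformly to the identity as `e → 1`, so the exponent
does not change the limsup.
-/

open Filter Topology

section Words

variable {X : Type*}

theorem listLegal_iff_forall_not_infix {F : Set (List X)} {w : List X} :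
    ListLegal F w ↔ ∀ f ∈ F, ¬ f <:+: w := by
  simp only [ListLegal, List.IsInfix, not_exists]
  exact forall₂_congr fun _ _ => forall₂_congr fun _ _ => ne_comm

theorem ListLegal.of_infix {F : Set (List X)} {w w' : List X} (h : ListLegal F w)
    (hw : w' <:+: w) : ListLegal F w' :=
  listLegal_iff_forall_not_infix.2 fun f hf hfw =>
    listLegal_iff_forall_not_infix.1 h f hf (hfw.trans hw)

theorem infix_take_of_length_le (u f v : List X) {m : ℕ} (h : u.length + f.length ≤ m) :
    f <:+: (u ++ f ++ v).take m := by
  refine ⟨u, v.take (m - u.length - f.length), ?_⟩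
  rw [List.append_assoc u f, List.take_append, List.take_append,
    List.take_of_length_le (by omega : u.length ≤ m),
    List.take_of_length_le (by omega : f.length ≤ m - u.length), List.length_append,
    List.append_assoc, Nat.sub_sub]

/-- A factor of length at most `l + 1` of a word of length `n + l` lies inside one of its
`n` windows of length `l + 1`. -/
theorem listLegal_of_forall_window {F : Set (List X)} {w : List X} {n l : ℕ} (hn : 1 ≤ n)
    (hw : w.length = n + l) (hF : ∀ f ∈ F, f.length ≤ l + 1)
    (h : ∀ i < n, ListLegal F ((w.drop i).take (l + 1))) : ListLegal F w := by
  rw [listLegal_iff_forall_not_infix]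
  rintro f hf ⟨u, v, rfl⟩
  have hlen : u.length + (f.length + v.length) = n + l := by simpa using hw
  have hfl := hF f hf
  set i := min u.length (n - 1)
  refine listLegal_iff_forall_not_infix.1 (h i (by omega)) f hf ?_
  rw [List.append_assoc, List.drop_append_of_le_length (by omega), ← List.append_assoc]
  exact infix_take_of_length_le _ _ _ (by rw [List.length_drop]; omega)

theorem eq_of_forall_window_eq {w w' : List X} {n l : ℕ} (hn : 1 ≤ n)
    (hw : w.length = n + l) (hw' : w'.length = n + l)
    (h : ∀ i < n, (w.drop i).take (l + 1) = (w'.drop i).take (l + 1)) : w = w' := by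
  refine List.ext_getElem? fun j => ?_
  by_cases hj : j < n + l
  · set i := min j (n - 1)
    have hwin : ∀ v : List X, ((v.drop i).take (l + 1))[j - i]? = v[j]? := fun v => by
      rw [List.getElem?_take, if_pos (by omega), List.getElem?_drop,
        Nat.add_sub_cancel' (by omega)]
    rw [← hwin w, ← hwin w', h i (by omega)]
  · rw [List.getElem?_eq_none (by omega), List.getElem?_eq_none (by omega)]

/-- Glue a chain of overlapping words into one word, appending the last letter of each new
term. -/
theorem exists_forall_window_eq {l : ℕ} (seq : ℕ → List X) {n : ℕ} (hn : 1 ≤ n)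
    (hlen : ∀ i < n, (seq i).length = l + 1)
    (hchain : ∀ i, i + 1 < n → (seq i).drop 1 = (seq (i + 1)).take l) :
    ∃ w : List X, w.length = n + l ∧ ∀ i < n, (w.drop i).take (l + 1) = seq i := by
  induction n, hn using Nat.le_induction with
  | base =>
    refine ⟨seq 0, by rw [hlen 0 one_pos, add_comm], fun i hi => ?_⟩
    obtain rfl : i = 0 := by omega
    exact List.take_of_length_le (hlen 0 one_pos).le
  | succ n hn ih =>
    obtain ⟨w, hwlen, hwin⟩ := ih (fun i hi => hlen i (by omega)) (fun i hi => hchain i (by omega))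
    have hlast : (seq n).length = l + 1 := hlen n (by omega)
    refine ⟨w ++ [(seq n)[l]], by simp [hwlen]; omega, fun i hi => ?_⟩
    rcases Nat.lt_succ_iff_lt_or_eq.1 hi with hi | rfl
    · rw [List.drop_append_of_le_length (by omega),
        List.take_append_of_le_length (by rw [List.length_drop]; omega), hwin i hi]
    · have hdrop : w.drop i = (seq i).take l := by
        obtain ⟨k, rfl⟩ : ∃ k, i = k + 1 := ⟨i - 1, by omega⟩
        rw [← hchain k (by omega), ← hwin k (by omega), List.drop_take, List.drop_drop,
          List.take_of_length_le (by rw [List.length_drop]; omega), add_comm]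
      rw [List.drop_append_of_le_length (by omega), hdrop, ← List.take_succ_eq_append_getElem,
        List.take_of_length_le hlast.le, List.take_of_length_le hlast.le]

def IsUfnarovskiPath (F : Set (List X)) (l n : ℕ) (seq : Fin n → List X) : Prop :=
  (∀ i, (seq i).length = l + 1 ∧ ListLegal F (seq i)) ∧
    ∀ (i : Fin n) (h : (i : ℕ) + 1 < n), (seq i).drop 1 = (seq ⟨(i : ℕ) + 1, h⟩).take l

theorem isUfnarovskiPath_windows {F : Set (List X)} {l n : ℕ} {w : List X}
    (hw : w.length = n + l) (hlegal : ListLegal F w) :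
    IsUfnarovskiPath F l n fun i => (w.drop i).take (l + 1) := by
  refine ⟨fun i => ⟨?_, hlegal.of_infix ?_⟩, fun i _ => ?_⟩
  · rw [List.length_take, List.length_drop]
    omega
  · exact (List.take_prefix _ _).isInfix.trans (List.drop_suffix _ _).isInfix
  · rw [List.drop_take, List.drop_drop, List.take_take, Nat.add_sub_cancel,
      min_eq_left (Nat.le_succ l)]

theorem card_legal_eq_card_ufnarovskiPath (F : Set (List X)) {l n : ℕ} (hn : 1 ≤ n)
    (hF : ∀ f ∈ F, f.length ≤ l + 1) :
    Nat.card {w : List X // w.length = n + l ∧ ListLegal F w} =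
      Nat.card {seq // IsUfnarovskiPath F l n seq} := by
  refine Nat.card_eq_of_bijective
    (fun w => ⟨fun i => (w.1.drop i).take (l + 1), isUfnarovskiPath_windows w.2.1 w.2.2⟩)
    ⟨fun w w' h => Subtype.ext <| eq_of_forall_window_eq hn w.2.1 w'.2.1 fun i hi =>
      congrFun (congrArg Subtype.val h) ⟨i, hi⟩, ?_⟩
  rintro ⟨seq, hpath, hchain⟩
  let seqℕ : ℕ → List X := fun i => if h : i < n then seq ⟨i, h⟩ else []
  have hseqℕ : ∀ i (h : i < n), seqℕ i = seq ⟨i, h⟩ := fun i h => dif_pos h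
  obtain ⟨w, hwlen, hwin⟩ := exists_forall_window_eq seqℕ hn
    (fun i hi => hseqℕ i hi ▸ (hpath ⟨i, hi⟩).1)
    (fun i hi => by rw [hseqℕ i (by omega), hseqℕ _ hi]; exact hchain ⟨i, by omega⟩ hi)
  have hlegal : ListLegal F w := listLegal_of_forall_window hn hwlen hF fun i hi =>
    (hwin i hi).symm ▸ hseqℕ i hi ▸ (hpath ⟨i, hi⟩).2
  exact ⟨⟨w, hwlen, hlegal⟩, Subtype.ext <| funext fun i => (hwin i i.2).trans (hseqℕ i i.2)⟩

theorem card_length_eq_and_le_card_pow [Fintype X] (P : List X → Prop) (m : ℕ) :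
    Nat.card {w : List X // w.length = m ∧ P w} ≤ Fintype.card X ^ m := by
  rw [← card_vector, ← Nat.card_eq_fintype_card]
  exact Nat.card_le_card_of_injective (fun w => ⟨w.1, w.2.1⟩) fun _ _ h =>
    Subtype.ext (congrArg List.Vector.toList h)

end Words

theorem limsup_add_eq_of_tendsto_zero {ι : Type*} {f : Filter ι} [f.NeBot] {u v : ι → ℝ}
    (hu_le : IsBoundedUnder (· ≤ ·) f u) (hu_ge : IsBoundedUnder (· ≥ ·) f u)
    (hv : Tendsto v f (𝓝 0)) :
    limsup (u + v) f = limsup u f := by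
  have hu_co : IsCoboundedUnder (· ≤ ·) f u := hu_ge.isCoboundedUnder_flip
  apply le_antisymm
  · simpa [hv.limsup_eq] using limsup_add_le hu_ge hu_le hv.isCoboundedUnder_le hv.isBoundedUnder_le
  · simpa [hv.liminf_eq] using le_limsup_add hu_le hu_co hv.isBoundedUnder_le hv.isBoundedUnder_ge

/-- Uniform continuity of `(x, e) ↦ x ^ e` on the compact set `[0, B] × [1/2, 2]`. -/
theorem tendsto_rpow_sub_self_of_tendsto_one {ι : Type*} {f : Filter ι} {x e : ι → ℝ} {B : ℝ}
    (hx : ∀ i, x i ∈ Set.Icc 0 B) (he : Tendsto e f (𝓝 1)) :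
    Tendsto (fun i => x i ^ e i - x i) f (𝓝 0) := by
  set K : Set (ℝ × ℝ) := Set.Icc 0 B ×ˢ Set.Icc (1 / 2) 2
  have hcont : ContinuousOn (fun p : ℝ × ℝ => p.1 ^ p.2) K := fun p hp =>
    (Real.continuousAt_rpow p (Or.inr (by linarith [hp.2.1]))).continuousWithinAt
  have hunif := (isCompact_Icc.prod isCompact_Icc).uniformContinuousOn_of_continuous hcont
  rw [Metric.tendsto_nhds]
  intro ε hε
  obtain ⟨δ, hδ, hK⟩ := Metric.uniformContinuousOn_iff.1 hunif ε hε
  filter_upwards [Metric.tendsto_nhds.1 he _ (lt_min hδ one_half_pos)] with i hi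
  rw [Real.dist_eq, lt_min_iff, abs_sub_lt_iff, abs_sub_lt_iff] at hi
  have hdist := hK (x i, e i) ⟨hx i, by constructor <;> linarith⟩ (x i, 1) ⟨hx i, by norm_num⟩
    (by simpa [Prod.dist_eq, Real.dist_eq, abs_sub_lt_iff] using hi.1)
  simpa [Real.dist_eq] using hdist

theorem limsup_rpow_eq_of_tendsto_one {ι : Type*} {f : Filter ι} [f.NeBot] {x e : ι → ℝ} {B : ℝ}
    (hx : ∀ i, x i ∈ Set.Icc 0 B) (he : Tendsto e f (𝓝 1)) :
    limsup (fun i => x i ^ e i) f = limsup x f := by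
  have := limsup_add_eq_of_tendsto_zero (isBoundedUnder_of ⟨B, fun i => (hx i).2⟩)
    (isBoundedUnder_of ⟨0, fun i => (hx i).1⟩) (tendsto_rpow_sub_self_of_tendsto_one hx he)
  simpa [Pi.add_def] using this

theorem rpow_one_div_natCast_le {a B : ℝ} {m : ℕ} (ha : 0 ≤ a) (haB : a ≤ B ^ m) (hB : 1 ≤ B) :
    a ^ (1 / (m : ℝ)) ≤ B := by
  rcases eq_or_ne m 0 with rfl | hm
  · simpa using hB
  · calc a ^ (1 / (m : ℝ)) ≤ (B ^ m) ^ (1 / (m : ℝ)) := by gcongr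
      _ = B := by rw [one_div, Real.pow_rpow_inv_natCast (by linarith) hm]

theorem limsup_root_card_legal_eq_limsup_root_card_paths_general
    (X : Type*) [Fintype X] (F : Finset (List X)) (l : ℕ)
    (hFle : ∀ f ∈ F, f.length ≤ l + 1) :
    Filter.limsup
      (fun m : ℕ =>
        (Nat.card {w : List X // w.length = m ∧ ListLegal (↑F) w} : ℝ) ^ (1 / (m : ℝ)))
      Filter.atTop =
    Filter.limsup
      (fun n : ℕ =>
        (Nat.card {seq : Fin n → List X //
          (∀ i, (seq i).length = l + 1 ∧ ListLegal (↑F) (seq i)) ∧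
          ∀ (i : Fin n) (h : (i : ℕ) + 1 < n),
            (seq i).drop 1 = (seq ⟨(i : ℕ) + 1, h⟩).take l} : ℝ) ^ (1 / (n : ℝ)))
      Filter.atTop := by
  set a : ℕ → ℝ := fun m => Nat.card {w : List X // w.length = m ∧ ListLegal (↑F) w}
  set B : ℝ := Fintype.card X + 1
  have ha : ∀ m, a m ≤ B ^ m := fun m => calc
    a m ≤ (Fintype.card X : ℝ) ^ m := by
      simp only [a]
      exact_mod_cast card_length_eq_and_le_card_pow (ListLegal (F : Set (List X))) m
    _ ≤ B ^ m := by gcongr; linarith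
  have hroot : ∀ n, a (n + l) ^ (1 / ((n + l : ℕ) : ℝ)) ∈ Set.Icc 0 B := fun n =>
    ⟨by positivity, rpow_one_div_natCast_le (by positivity) (ha _) (by simp [B])⟩
  have hcard : ∀ n ≥ 1,
      a (n + l) = Nat.card {seq // IsUfnarovskiPath (F : Set (List X)) l n seq} :=
    fun n hn => congrArg Nat.cast (card_legal_eq_card_ufnarovskiPath _ hn hFle)
  have hexp : Tendsto (fun n : ℕ => 1 + l / (n : ℝ)) atTop (𝓝 1) := by
    simpa using tendsto_const_nhds.add (tendsto_const_div_atTop_nhds_zero_nat (l : ℝ))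
  calc limsup (fun m => a m ^ (1 / (m : ℝ))) atTop
      = limsup (fun n => a (n + l) ^ (1 / ((n + l : ℕ) : ℝ))) atTop := (limsup_nat_add _ l).symm
    _ = limsup (fun n => (a (n + l) ^ (1 / ((n + l : ℕ) : ℝ))) ^ (1 + l / (n : ℝ))) atTop :=
        (limsup_rpow_eq_of_tendsto_one hroot hexp).symm
    _ = _ := limsup_congr <| (eventually_ge_atTop 1).mono fun n hn => by
        have hn' : (n : ℝ) ≠ 0 := by positivity
        rw [← Real.rpow_mul (by positivity), hcard n hn]
        congr 1
        push_cast
        field_simp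

/-- Let `F` be a finite nonempty set of forbidden words, each of length at least `2`, with
`l + 1` the maximal length of a word of `F`.  Then
`limsup |L_m| ^ (1/m) = limsup (p_n) ^ (1/n)`, where `L_m` is the set of legal words of
length `m` and `p_n` is the number of paths of length `n` in the Ufnarovski graph: sequences
of `n` legal words of length `l + 1` in which the length-`l` suffix of each term equals the
length-`l` prefix of the next.  That is, the algebraic entropy of the monomial algebra equals
the algebraic entropy of the path algebra of its Ufnarovski graph. -/
theorem limsup_root_card_legal_eq_limsup_root_card_paths
    (X : Type*) [Fintype X] (F : Finset (List X)) (l : ℕ)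
    (hF2 : ∀ f ∈ F, 2 ≤ f.length) (hFle : ∀ f ∈ F, f.length ≤ l + 1)
    (hFmax : ∃ f ∈ F, f.length = l + 1) :
    Filter.limsup
      (fun m : ℕ =>
        (Nat.card {w : List X // w.length = m ∧ ListLegal (↑F) w} : ℝ) ^ (1 / (m : ℝ)))
      Filter.atTop =
    Filter.limsup
      (fun n : ℕ =>
        (Nat.card {seq : Fin n → List X //
          (∀ i, (seq i).length = l + 1 ∧ ListLegal (↑F) (seq i)) ∧
          ∀ (i : Fin n) (h : (i : ℕ) + 1 < n),
            (seq i).drop 1 = (seq ⟨(i : ℕ) + 1, h⟩).take l} : ℝ) ^ (1 / (n : ℝ)))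
      Filter.atTop :=
  limsup_root_card_legal_eq_limsup_root_card_paths_general X F l hFle
end

section
/- Let C be an abelian category in which every short exact sequence splits, and assume the derived category of C exists. Let X be an object of the derived category of C such that Hⁿ(X) = 0 for all but finitely many n ∈ ℤ. Then X is isomorphic to the finite direct sum, over the integers n with Hⁿ(X) ≠ 0, of the objects obtained by placing Hⁿ(X) in degree n (i.e. X ≅ ⨁ₙ (singleFunctor n).obj (Hⁿ(X)) ). -/
/-!
If every monomorphism splits, the inclusion `Zⁿ(K) ⟶ Kⁿ` of the cycles of a complex `K` has a
retraction, and composing it with `Zⁿ(K) ⟶ Hⁿ(K)` gives a quasi-isomorphism from `K` to the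
complex of its homology objects with zero differentials. When only finitely many `Hⁿ(K)` are
nonzero, that complex is the biproduct of the `Hⁿ(K)` placed in degree `n`, and the localization
functor `Q` to the derived category, being additive, preserves this biproduct.
-/

open CategoryTheory Limits

namespace HomologicalComplex

variable {C : Type*} [Category C] {ι : Type*} {c : ComplexShape ι}

section ZeroDifferentials

variable [HasZeroMorphisms C]

abbrev ofZeroDifferentials (X : ι → C) : HomologicalComplex C c where
  X := X
  d _ _ := 0

variable [CategoryWithHomology C]

noncomputable def ofZeroDifferentialsHomologyIso (X : ι → C) (i : ι) :
    (ofZeroDifferentials (c := c) X).homology i ≅ X i :=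
  ((ofZeroDifferentials X).isoHomologyπ (c.prev i) i rfl rfl).symm ≪≫
    (ofZeroDifferentials X).iCyclesIso i (c.next i) rfl rfl

lemma homologyπ_ofZeroDifferentialsHomologyIso_hom (X : ι → C) (i : ι) :
    (ofZeroDifferentials (c := c) X).homologyπ i ≫ (ofZeroDifferentialsHomologyIso X i).hom =
      (ofZeroDifferentials X).iCycles i := by
  simp only [ofZeroDifferentialsHomologyIso, Iso.trans_hom, Iso.symm_hom,
    isoHomologyπ_hom_inv_id_assoc, iCyclesIso_hom]

variable (K : HomologicalComplex C c) [∀ i, IsSplitMono (K.iCycles i)]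

noncomputable def toOfZeroDifferentialsHomology : K ⟶ ofZeroDifferentials (K.homology ·) where
  f i := retraction (K.iCycles i) ≫ K.homologyπ i
  comm' i j _ := by
    rw [comp_zero, ← K.toCycles_i, Category.assoc, IsSplitMono.id_assoc,
      toCycles_comp_homologyπ]

lemma cyclesMap_toOfZeroDifferentialsHomology_iCycles (i : ι) :
    cyclesMap (toOfZeroDifferentialsHomology K) i ≫ iCycles _ i = K.homologyπ i := by
  rw [cyclesMap_i]
  exact IsSplitMono.id_assoc _ _

instance : QuasiIso (toOfZeroDifferentialsHomology K) where
  quasiIsoAt i := by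
    rw [quasiIsoAt_iff_isIso_homologyMap]
    have : homologyMap (toOfZeroDifferentialsHomology K) i ≫
        (ofZeroDifferentialsHomologyIso _ i).hom = 𝟙 _ := by
      rw [← cancel_epi (K.homologyπ i), homologyπ_naturality_assoc,
        homologyπ_ofZeroDifferentialsHomologyIso_hom,
        cyclesMap_toOfZeroDifferentialsHomology_iCycles, Category.comp_id]
    rw [(Iso.comp_hom_eq_id _).1 this]
    infer_instance

end ZeroDifferentials

section Biproduct

variable [Preadditive C] [HasZeroObject C] [DecidableEq ι] (X : ι → C)

noncomputable def ofZeroDifferentialsBicone (s : Finset ι) :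
    Bicone (fun i : s => (single C c i).obj (X i)) where
  pt := ofZeroDifferentials X
  π i := mkHomToSingle (𝟙 _) (fun _ _ => Limits.zero_comp)
  ι i := mkHomFromSingle (𝟙 _) (fun _ _ => Limits.comp_zero)
  ι_π i j := by
    split_ifs with hij
    · subst hij
      refine hom_ext _ _ fun k => ?_
      by_cases hk : k = i
      · subst hk; simp
      · exact (isZero_single_obj_X c _ _ k hk).eq_of_src _ _
    · refine hom_ext _ _ fun k => ?_
      by_cases hk : k = i
      · subst hk
        exact (isZero_single_obj_X c _ _ _ fun h => hij (Subtype.ext h)).eq_of_tgt _ _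
      · exact (isZero_single_obj_X c _ _ k hk).eq_of_src _ _

noncomputable def ofZeroDifferentialsBiconeIsBilimit (s : Finset ι)
    (hX : ∀ i ∉ s, IsZero (X i)) :
    (ofZeroDifferentialsBicone (c := c) X s).IsBilimit := by
  refine isBilimitOfTotal _ ?_
  ext k
  change (eval C c k).map _ = _
  rw [Functor.map_sum]
  by_cases hk : k ∈ s
  · refine (Fintype.sum_eq_single ⟨k, hk⟩ fun j hj => ?_).trans ?_
    · rw [Functor.map_comp, eval_map,
        (isZero_single_obj_X c _ _ k fun h => hj (Subtype.ext h.symm)).eq_of_tgt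
          ((ofZeroDifferentialsBicone X s).π j |>.f k) 0]
      exact zero_comp
    · simp [ofZeroDifferentialsBicone]
      rfl
  · exact (hX k hk).eq_of_src _ _

end Biproduct
end HomologicalComplex

namespace DerivedCategory

variable {C : Type*} [Category C] [Abelian C] [HasDerivedCategory C]

noncomputable def isoBiproductSingleOfZeroDifferentials (X : ℤ → C) (s : Finset ℤ)
    (hX : ∀ n ∉ s, IsZero (X n)) :
    Q.obj (HomologicalComplex.ofZeroDifferentials X) ≅
      ⨁ fun n : s => (singleFunctor C n).obj (X n) :=
  biproduct.uniqueUpToIso _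
    (isBilimitOfPreserves Q (HomologicalComplex.ofZeroDifferentialsBiconeIsBilimit X s hX))

noncomputable def isoBiproductSingleHomology (K : CochainComplex C ℤ)
    [∀ n, IsSplitMono (K.iCycles n)] (s : Finset ℤ) (hK : ∀ n ∉ s, IsZero (K.homology n)) :
    Q.obj K ≅ ⨁ fun n : s => (singleFunctor C n).obj (K.homology n) :=
  asIso (Q.map K.toOfZeroDifferentialsHomology) ≪≫
    isoBiproductSingleOfZeroDifferentials _ s hK

end DerivedCategory

/-- Let `C` be an abelian category in which every short exact sequence splits (equivalently,
every monomorphism admits a retraction).  If `X` is an object of the derived category of `C`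
with `Hⁿ(X) = 0` for all but finitely many `n`, then `X` is isomorphic to the finite direct
sum, over the integers `n` with `Hⁿ(X) ≠ 0`, of the objects obtained by placing `Hⁿ(X)` in
degree `n`. -/
theorem iso_biproduct_single_homology_of_split
    (C : Type*) [Category C] [Abelian C] [HasDerivedCategory C]
    (hsplit : ∀ (A B : C) (f : A ⟶ B), Mono f → ∃ r : B ⟶ A, f ≫ r = 𝟙 A)
    (X : DerivedCategory C)
    (hfin : Set.Finite {n : ℤ | ¬ IsZero ((DerivedCategory.homologyFunctor C n).obj X)}) :
    Nonempty (X ≅ ⨁ (fun n : hfin.toFinset =>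
      (DerivedCategory.singleFunctor C (n : ℤ)).obj
        ((DerivedCategory.homologyFunctor C (n : ℤ)).obj X))) := by
  let K := DerivedCategory.Q.objPreimage X
  let e : DerivedCategory.Q.obj K ≅ X := DerivedCategory.Q.objObjPreimageIso X
  have (n : ℤ) : IsSplitMono (K.iCycles n) :=
    let ⟨r, hr⟩ := hsplit _ _ _ inferInstance
    ⟨⟨r, hr⟩⟩
  let H (n : ℤ) : (DerivedCategory.homologyFunctor C n).obj X ≅ K.homology n :=
    (DerivedCategory.homologyFunctor C n).mapIso e.symm ≪≫
      (DerivedCategory.homologyFunctorFactors C n).app K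
  have hK (n : ℤ) (hn : n ∉ hfin.toFinset) : IsZero (K.homology n) :=
    (H n).isZero_iff.1 (by simpa using hn)
  exact ⟨e.symm ≪≫ DerivedCategory.isoBiproductSingleHomology K _ hK ≪≫
    biproduct.mapIso fun n => (DerivedCategory.singleFunctor C n).mapIso (H n).symm⟩
end

section
/- Let C be an abelian category in which every short exact sequence splits, with derived category D = DerivedCategory C, and let O be an object of C. Suppose E_0 = 0, E_1, …, E_p are objects of D together with integers n_1, …, n_p and, for each i = 1, …, p, a distinguished triangle E_{i−1} → E_i → O[n_i] → E_{i−1}[1], where O[n_i] denotes the shift by n_i of the object of D obtained by placing O in degree 0. Then for every n ∈ ℤ, the homology object Hⁿ(E_p) is a retract of the biproduct O^{⊕ s}, where s is the number of indices i with n_i = −n. -/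
open CategoryTheory Limits Pretriangulated

attribute [local instance] CategoryTheory.Abelian.hasFiniteBiproducts

section Aux

variable {C : Type*} [Category C] [Abelian C]

lemma aux_retract_of_exact
    (hsplit : ∀ (A B : C) (f : A ⟶ B), Mono f → ∃ r : B ⟶ A, f ≫ r = 𝟙 A)
    (S : ShortComplex C) (hS : S.Exact) :
    ∃ (i : S.X₂ ⟶ S.X₁ ⊞ S.X₃) (r : S.X₁ ⊞ S.X₃ ⟶ S.X₂), i ≫ r = 𝟙 S.X₂ := by
  obtain ⟨ρ, hρ⟩ := hsplit _ _ S.iCycles inferInstance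
  have : Epi S.toCycles := hS.epi_toCycles
  obtain ⟨r₁, hr₁⟩ := hsplit _ _ (kernel.ι S.toCycles) inferInstance
  have hφ : kernel.ι S.toCycles ≫ (𝟙 S.X₁ - r₁ ≫ kernel.ι S.toCycles) = 0 := by
    simp only [Preadditive.comp_sub, Category.comp_id, reassoc_of% hr₁, Category.id_comp,
      sub_self]
  set s : S.cycles ⟶ S.X₁ := Abelian.epiDesc S.toCycles _ hφ with hs_def
  have hs : s ≫ S.toCycles = 𝟙 S.cycles := by
    rw [← cancel_epi S.toCycles, Abelian.comp_epiDesc_assoc]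
    simp [Preadditive.sub_comp, kernel.condition_assoc]
  obtain ⟨t, ht⟩ := hsplit _ _ (image.ι S.g) inferInstance
  have h0 : kernel.ι (factorThruImage S.g) ≫ S.g = 0 := by
    have h := kernel.condition_assoc (factorThruImage S.g) (image.ι S.g)
    rw [image.fac] at h
    simpa using h
  have hκ : kernel.ι (factorThruImage S.g) ≫ (𝟙 S.X₂ - ρ ≫ S.iCycles) = 0 := by
    have hfac : kernel.ι (factorThruImage S.g) =
        S.liftCycles _ h0 ≫ S.iCycles := by rw [S.liftCycles_i]
    rw [hfac, Preadditive.comp_sub, Category.comp_id, Category.assoc]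
    simp [reassoc_of% hρ]
  set u : image S.g ⟶ S.X₂ := Abelian.epiDesc (factorThruImage S.g) _ hκ with hu_def
  have hu : factorThruImage S.g ≫ u = 𝟙 S.X₂ - ρ ≫ S.iCycles := Abelian.comp_epiDesc _ _ _
  refine ⟨biprod.lift (ρ ≫ s) S.g, biprod.desc S.f (t ≫ u), ?_⟩
  rw [biprod.lift_desc]
  have h1 : (ρ ≫ s) ≫ S.f = ρ ≫ S.iCycles := by
    rw [← S.toCycles_i, Category.assoc, reassoc_of% hs]
  have h2 : S.g ≫ t ≫ u = 𝟙 S.X₂ - ρ ≫ S.iCycles := by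
    calc S.g ≫ t ≫ u = (factorThruImage S.g ≫ image.ι S.g) ≫ t ≫ u := by rw [image.fac]
    _ = factorThruImage S.g ≫ u := by rw [Category.assoc, reassoc_of% ht]
    _ = _ := hu
  rw [h1, h2]
  abel

omit [Abelian C] in
lemma aux_retr_trans {X Y Z : C} (h1 : ∃ (i : X ⟶ Y) (r : Y ⟶ X), i ≫ r = 𝟙 X)
    (h2 : ∃ (i : Y ⟶ Z) (r : Z ⟶ Y), i ≫ r = 𝟙 Y) :
    ∃ (i : X ⟶ Z) (r : Z ⟶ X), i ≫ r = 𝟙 X := by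
  obtain ⟨i₁, r₁, h₁⟩ := h1
  obtain ⟨i₂, r₂, h₂⟩ := h2
  exact ⟨i₁ ≫ i₂, r₂ ≫ r₁, by rw [Category.assoc, reassoc_of% h₂, h₁]⟩

omit [Abelian C] in
lemma aux_retr_of_iso {X Y : C} (e : X ≅ Y) :
    ∃ (i : X ⟶ Y) (r : Y ⟶ X), i ≫ r = 𝟙 X := ⟨e.hom, e.inv, e.hom_inv_id⟩

lemma aux_retr_biprod_left {A A' B : C}
    (h : ∃ (i : A ⟶ A') (r : A' ⟶ A), i ≫ r = 𝟙 A) :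
    ∃ (i : A ⊞ B ⟶ A' ⊞ B) (r : A' ⊞ B ⟶ A ⊞ B), i ≫ r = 𝟙 (A ⊞ B) := by
  obtain ⟨i₁, r₁, h₁⟩ := h
  refine ⟨biprod.map i₁ (𝟙 B), biprod.map r₁ (𝟙 B), ?_⟩
  ext <;> simp [h₁]

lemma aux_retr_biprod_right {A B B' : C}
    (h : ∃ (i : B ⟶ B') (r : B' ⟶ B), i ≫ r = 𝟙 B) :
    ∃ (i : A ⊞ B ⟶ A ⊞ B') (r : A ⊞ B' ⟶ A ⊞ B), i ≫ r = 𝟙 (A ⊞ B) := by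
  obtain ⟨i₁, r₁, h₁⟩ := h
  refine ⟨biprod.map (𝟙 A) i₁, biprod.map (𝟙 A) r₁, ?_⟩
  ext <;> simp [h₁]

lemma aux_retr_biprod_zero {A B : C} (hB : IsZero B) :
    ∃ (i : A ⊞ B ⟶ A) (r : A ⟶ A ⊞ B), i ≫ r = 𝟙 (A ⊞ B) := by
  refine ⟨biprod.fst, biprod.inl, ?_⟩
  have h := biprod.total (X := A) (Y := B)
  have h2 : (biprod.inr : B ⟶ A ⊞ B) = 0 := hB.eq_of_src _ _
  rw [← h, h2, comp_zero, add_zero]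

lemma aux_retr_zero {X : C} (hX : IsZero X) (Y : C) :
    ∃ (i : X ⟶ Y) (r : Y ⟶ X), i ≫ r = 𝟙 X :=
  ⟨0, 0, by rw [comp_zero]; exact (hX.eq_of_src _ _)⟩

lemma aux_biprod_succ (O : C) (c : ℕ) :
    ∃ (i : (⨁ fun _ : Fin c => O) ⊞ O ⟶ ⨁ fun _ : Fin (c + 1) => O)
      (r : (⨁ fun _ : Fin (c + 1) => O) ⟶ (⨁ fun _ : Fin c => O) ⊞ O),
      i ≫ r = 𝟙 _ := by
  refine ⟨biprod.desc (biproduct.desc fun j => biproduct.ι (fun _ : Fin (c + 1) => O) j.castSucc)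
      (biproduct.ι (fun _ : Fin (c + 1) => O) (Fin.last c)),
    biproduct.desc (fun j => Fin.lastCases biprod.inr
      (fun j' => biproduct.ι (fun _ : Fin c => O) j' ≫ biprod.inl) j), ?_⟩
  apply biprod.hom_ext'
  · apply biproduct.hom_ext'
    intro j
    simp
  · simp

variable [HasDerivedCategory C]

noncomputable def auxSingleShiftIso (O : C) (t : ℤ) :
    (((DerivedCategory.singleFunctor C 0).obj O)⟦t⟧ : DerivedCategory C) ≅
      (DerivedCategory.singleFunctor C (-t)).obj O :=
  ((DerivedCategory.singleFunctors C).shiftIso t (-t) 0 (by ring)).app O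

noncomputable def auxHIso (O : C) (t n : ℤ) :
    (DerivedCategory.homologyFunctor C n).obj
        (((DerivedCategory.singleFunctor C 0).obj O)⟦t⟧) ≅
      ((HomologicalComplex.single C (ComplexShape.up ℤ) (-t)).obj O).homology n :=
  (DerivedCategory.homologyFunctor C n).mapIso (auxSingleShiftIso O t ≪≫
    ((SingleFunctors.evaluation _ _ (-t)).mapIso
      (DerivedCategory.singleFunctorsPostcompQIso C)).app O) ≪≫
    (DerivedCategory.homologyFunctorFactors C n).app _

lemma aux_H_isZero (O : C) (t n : ℤ) (h : n ≠ -t) :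
    IsZero ((DerivedCategory.homologyFunctor C n).obj
      (((DerivedCategory.singleFunctor C 0).obj O)⟦t⟧)) :=
  IsZero.of_iso (HomologicalComplex.isZero_single_obj_homology _ _ O n h) (auxHIso O t n)

lemma aux_H_iso (O : C) (t n : ℤ) (h : n = -t) :
    Nonempty ((DerivedCategory.homologyFunctor C n).obj
      (((DerivedCategory.singleFunctor C 0).obj O)⟦t⟧) ≅ O) := by
  subst h
  exact ⟨auxHIso O t (-t) ≪≫ HomologicalComplex.singleObjHomologySelfIso _ _ O⟩

end Aux

/-- Let `C` be an abelian category in which every short exact sequence splits (equivalently,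
every monomorphism admits a retraction), let `O` be an object of `C`, and let
`0 = E 0, E 1, …, E p` be a tower of objects of the derived category of `C` such that for each
`i` there is a distinguished triangle `E i ⟶ E (i+1) ⟶ O⟦n i⟧ ⟶ (E i)⟦1⟧`, where `O⟦t⟧` is the
shift by `t` of `O` placed in degree `0`.  Then for every `n ∈ ℤ` the homology `Hⁿ(E p)` is a
retract of the biproduct of `s` copies of `O`, where `s` is the number of indices `i` with
`n i = -n`. -/
theorem homology_retract_biproduct_of_tower
    (C : Type*) [Category C] [Abelian C] [HasDerivedCategory C]
    (hsplit : ∀ (A B : C) (f : A ⟶ B), Mono f → ∃ r : B ⟶ A, f ≫ r = 𝟙 A)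
    (O : C) (p : ℕ) (E : Fin (p + 1) → DerivedCategory C)
    (hE0 : IsZero (E 0)) (ns : Fin p → ℤ)
    (hE : ∀ i : Fin p, ∃ (f : E i.castSucc ⟶ E i.succ)
      (g : E i.succ ⟶ ((DerivedCategory.singleFunctor C 0).obj O)⟦ns i⟧)
      (h : ((DerivedCategory.singleFunctor C 0).obj O)⟦ns i⟧ ⟶ (E i.castSucc)⟦(1 : ℤ)⟧),
      Triangle.mk f g h ∈ distTriang (DerivedCategory C))
    (n : ℤ) :
    ∃ (i : (DerivedCategory.homologyFunctor C n).obj (E (Fin.last p)) ⟶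
        ⨁ (fun _ : Fin ((Finset.univ.filter fun i : Fin p => ns i = -n).card) => O))
      (r : (⨁ (fun _ : Fin ((Finset.univ.filter fun i : Fin p => ns i = -n).card) => O)) ⟶
        (DerivedCategory.homologyFunctor C n).obj (E (Fin.last p))),
      i ≫ r = 𝟙 ((DerivedCategory.homologyFunctor C n).obj (E (Fin.last p))) := by
  have hcard : ∀ (m : ℕ) (hm : m < p),
      (Finset.univ.filter fun i : Fin p => i.1 < m + 1 ∧ ns i = -n) =
        if ns ⟨m, hm⟩ = -n then
          insert ⟨m, hm⟩ (Finset.univ.filter fun i : Fin p => i.1 < m ∧ ns i = -n)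
        else (Finset.univ.filter fun i : Fin p => i.1 < m ∧ ns i = -n) := by
    intro m hm
    split_ifs with hP
    · ext i
      simp only [Finset.mem_insert, Finset.mem_filter, Finset.mem_univ, true_and]
      constructor
      · rintro ⟨h1, h2⟩
        rcases Nat.lt_succ_iff_lt_or_eq.1 h1 with h | h
        · exact Or.inr ⟨h, h2⟩
        · exact Or.inl (Fin.ext h)
      · rintro (rfl | ⟨h1, h2⟩)
        · exact ⟨Nat.lt_succ_self m, hP⟩
        · exact ⟨Nat.lt_succ_of_lt h1, h2⟩
    · ext i
      simp only [Finset.mem_filter, Finset.mem_univ, true_and]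
      constructor
      · rintro ⟨h1, h2⟩
        rcases Nat.lt_succ_iff_lt_or_eq.1 h1 with h | h
        · exact ⟨h, h2⟩
        · exact absurd h2 (by cases (Fin.ext h : i = ⟨m, hm⟩); exact hP)
      · rintro ⟨h1, h2⟩
        exact ⟨Nat.lt_succ_of_lt h1, h2⟩
  suffices H : ∀ (m : ℕ) (hm : m ≤ p),
      ∃ (i : (DerivedCategory.homologyFunctor C n).obj (E ⟨m, Nat.lt_succ_of_le hm⟩) ⟶
          ⨁ (fun _ : Fin ((Finset.univ.filter fun i : Fin p => i.1 < m ∧ ns i = -n).card) => O))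
        (r : (⨁ (fun _ : Fin
            ((Finset.univ.filter fun i : Fin p => i.1 < m ∧ ns i = -n).card) => O)) ⟶
          (DerivedCategory.homologyFunctor C n).obj (E ⟨m, Nat.lt_succ_of_le hm⟩)),
        i ≫ r = 𝟙 ((DerivedCategory.homologyFunctor C n).obj (E ⟨m, Nat.lt_succ_of_le hm⟩)) by
    have hset : (Finset.univ.filter fun i : Fin p => i.1 < p ∧ ns i = -n) =
        (Finset.univ.filter fun i : Fin p => ns i = -n) := by
      ext i
      simp [i.isLt]
    rw [← hset]
    exact H p le_rfl
  intro m
  induction m with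
  | zero =>
    intro hm
    have h00 : (⟨0, Nat.lt_succ_of_le hm⟩ : Fin (p + 1)) = 0 := by
      ext
      simp
    rw [h00]
    exact aux_retr_zero ((DerivedCategory.homologyFunctor C n).map_isZero hE0) _
  | succ m ih =>
    intro hm
    have hm' : m ≤ p := Nat.le_of_succ_le hm
    obtain ⟨f, g, h, hT⟩ := hE ⟨m, hm⟩
    have hex := DerivedCategory.HomologySequence.exact₂ _ hT n
    obtain ⟨i₀, r₀, h₀⟩ := aux_retract_of_exact hsplit _ hex
    have R1 : ∃ (i : (DerivedCategory.homologyFunctor C n).obj (E ⟨m + 1, Nat.lt_succ_of_le hm⟩) ⟶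
          (DerivedCategory.homologyFunctor C n).obj (E ⟨m, Nat.lt_succ_of_le hm'⟩) ⊞
            (DerivedCategory.homologyFunctor C n).obj
              (((DerivedCategory.singleFunctor C 0).obj O)⟦ns ⟨m, hm⟩⟧))
        (r : _ ⟶ _), i ≫ r = 𝟙 _ := ⟨i₀, r₀, h₀⟩
    have R2 := aux_retr_trans R1 (aux_retr_biprod_left (ih hm'))
    by_cases hns : ns ⟨m, hm⟩ = -n
    · obtain ⟨e⟩ := aux_H_iso O (ns ⟨m, hm⟩) n (by omega)
      have R3 := aux_retr_trans R2 (aux_retr_biprod_right (aux_retr_of_iso e))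
      have R4 := aux_retr_trans R3 (aux_biprod_succ O _)
      have hc : (Finset.univ.filter fun i : Fin p => i.1 < m + 1 ∧ ns i = -n).card =
          (Finset.univ.filter fun i : Fin p => i.1 < m ∧ ns i = -n).card + 1 := by
        rw [hcard m hm, if_pos hns, Finset.card_insert_of_notMem (by simp)]
      rw [hc]
      exact R4
    · have hz := aux_H_isZero O (ns ⟨m, hm⟩) n (by omega)
      have R3 := aux_retr_trans R2 (aux_retr_biprod_zero hz)
      have hc : (Finset.univ.filter fun i : Fin p => i.1 < m + 1 ∧ ns i = -n).card =
          (Finset.univ.filter fun i : Fin p => i.1 < m ∧ ns i = -n).card := by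
        rw [hcard m hm, if_neg hns]
      rw [hc]
      exact R3
end

section
/- Let C be an abelian category in which every short exact sequence splits, and let O be an object of C such that every object of C is a retract of a finite biproduct O^{⊕k} of copies of O. Then every object X of the derived category of C whose homology Hⁿ(X) vanishes for all but finitely many n ∈ ℤ is a retract of a finite biproduct of shifts of O, i.e. there exist an s ∈ ℕ and integers m_1, …, m_s such that X is a retract of ⨁_{i=1}^{s} O[m_i] in the derived category. -/
/-!
Over a semisimple abelian category the inclusion of cycles and the projection onto homology of a
cochain complex `K` both split. This yields, for each `n`, maps `K ⟶ Hⁿ(K)[-n] ⟶ K` whose composite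
is the identity on `Hⁿ(K)` and zero on the other homology objects. Summed over the finitely many
degrees with nonzero homology they give a quasi-isomorphism, so in the derived category `K` is a
retract of `⨁ₙ Hⁿ(K)[-n]`; and each `Hⁿ(K)[-n]` is a retract of a sum of copies of `O[-n]`.
-/

open CategoryTheory Limits HomologicalComplex

attribute [local instance] CategoryTheory.Abelian.hasFiniteBiproducts

section Preadditive

variable {D : Type*} [Category D] [Preadditive D]

lemma sum_comp_π_comp_ι_comp {J : Type} [Fintype J] (Z : J → D) [HasBiproduct Z] {A B : D}
    (f : A ⟶ ⨁ Z) (g : ⨁ Z ⟶ B) :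
    ∑ j, (f ≫ biproduct.π Z j) ≫ (biproduct.ι Z j ≫ g) = f ≫ g := by
  simp_rw [Category.assoc, ← Preadditive.comp_sum]
  rw [Finset.sum_congr rfl fun j _ => (Category.assoc (biproduct.π Z j) _ g).symm,
    ← Preadditive.sum_comp, biproduct.total, Category.id_comp]

lemma sum_comp_map_π_comp_map_ι_comp {E : Type*} [Category E] [Preadditive E] (G : D ⥤ E)
    [G.Additive] {J : Type} [Fintype J] (Z : J → D) [HasBiproduct Z] {Y : D} (i : Y ⟶ ⨁ Z)
    (r : (⨁ Z) ⟶ Y) (hir : i ≫ r = 𝟙 Y)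
    {A B : E} (f : A ⟶ G.obj Y) (g : G.obj Y ⟶ B) :
    ∑ j, (f ≫ G.map (i ≫ biproduct.π Z j)) ≫ (G.map (biproduct.ι Z j ≫ r) ≫ g) = f ≫ g := by
  simp_rw [Category.assoc, ← Category.assoc (G.map _), ← G.map_comp, ← Preadditive.comp_sum,
    ← Preadditive.sum_comp, ← G.map_sum, sum_comp_π_comp_ι_comp, hir, G.map_id, Category.id_comp]

lemma exists_retract_fin_biproduct_of_isIso_sum [HasFiniteBiproducts D] {ι J : Type*}
    [Fintype J] (F : ι → D) (c : J → ι) {X : D} (a : ∀ j, X ⟶ F (c j)) (b : ∀ j, F (c j) ⟶ X)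
    [IsIso (∑ j, a j ≫ b j)] :
    ∃ (s : ℕ) (m : Fin s → ι) (i : X ⟶ ⨁ fun k => F (m k)) (r : (⨁ fun k => F (m k)) ⟶ X),
      i ≫ r = 𝟙 X := by
  let ε := (Fintype.equivFin J).symm
  refine ⟨Fintype.card J, c ∘ ε, biproduct.lift fun k => a (ε k),
    biproduct.desc (fun k => b (ε k)) ≫ inv (∑ j, a j ≫ b j), ?_⟩
  rw [← Category.assoc, biproduct.lift_desc, Equiv.sum_comp ε fun j => a j ≫ b j,
    IsIso.hom_inv_id]

end Preadditive

section Abelian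

variable {C : Type*} [Category C] [Abelian C] {ι : Type*} {c : ComplexShape ι}

lemma exists_section_of_epi
    (hsplit : ∀ (A B : C) (f : A ⟶ B), Mono f → ∃ r : B ⟶ A, f ≫ r = 𝟙 A)
    {A B : C} (p : A ⟶ B) [Epi p] : ∃ s : B ⟶ A, s ≫ p = 𝟙 B := by
  obtain ⟨t, ht⟩ := hsplit _ _ (kernel.ι p) inferInstance
  let S := ShortComplex.mk (kernel.ι p) p (kernel.condition p)
  have hS : S.Exact := S.exact_of_f_is_kernel (kernelIsKernel p)
  have : Epi S.g := ‹Epi p›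
  exact ⟨_, (ShortComplex.Splitting.ofExactOfRetraction S hS t ht this).s_g⟩

lemma exists_homologyMap_comp_single_eq_id [DecidableEq ι]
    (hsplit : ∀ (A B : C) (f : A ⟶ B), Mono f → ∃ r : B ⟶ A, f ≫ r = 𝟙 A)
    (K : HomologicalComplex C c) (n : ι) :
    ∃ (p : K ⟶ (single C c n).obj (K.homology n)) (q : (single C c n).obj (K.homology n) ⟶ K),
      homologyMap (p ≫ q) n = 𝟙 _ := by
  obtain ⟨ρ, hρ⟩ := hsplit _ _ (K.iCycles n) inferInstance
  obtain ⟨σ, hσ⟩ := exists_section_of_epi hsplit (K.homologyπ n)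
  have hdρ (i : ι) : K.d i n ≫ ρ = K.toCycles i n := by
    rw [← K.toCycles_i i n, Category.assoc, hρ, Category.comp_id]
  let p := mkHomToSingle (ρ ≫ K.homologyπ n) fun i _ => by
    rw [← Category.assoc, hdρ, toCycles_comp_homologyπ]
  let q := mkHomFromSingle (σ ≫ K.iCycles n) fun j _ => by
    rw [Category.assoc, iCycles_d, comp_zero]
  refine ⟨p, q, ?_⟩
  have hcycles : cyclesMap (p ≫ q) n = K.homologyπ n ≫ σ := by
    rw [← cancel_mono (K.iCycles n), cyclesMap_i]
    simp [p, q, mkHomToSingle_f, mkHomFromSingle_f, reassoc_of% hρ]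
  rw [← cancel_epi (K.homologyπ n), homologyπ_naturality, hcycles, Category.assoc, hσ,
    Category.comp_id]

lemma homologyMap_comp_single_eq_zero [DecidableEq ι] {K L : HomologicalComplex C c} {n m : ι}
    (hmn : m ≠ n) {A : C} (p : K ⟶ (single C c n).obj A) (q : (single C c n).obj A ⟶ L) :
    homologyMap (p ≫ q) m = 0 := by
  rw [homologyMap_comp, (isZero_single_obj_homology c n A m hmn).eq_of_tgt (homologyMap p m) 0,
    zero_comp]

lemma quasiIso_sum_of_homologyMap {K : HomologicalComplex C c} (S : Finset ι) (P : ι → (K ⟶ K))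
    (hP : ∀ n, homologyMap (P n) n = 𝟙 _) (hP_ne : ∀ n m, m ≠ n → homologyMap (P n) m = 0)
    (hS : ∀ n ∉ S, IsZero (K.homology n)) : QuasiIso (∑ n ∈ S, P n) := by
  rw [quasiIso_iff]
  intro m
  rw [quasiIsoAt_iff_isIso_homologyMap]
  suffices homologyMap (∑ n ∈ S, P n) m = 𝟙 _ by rw [this]; infer_instance
  by_cases hm : m ∈ S
  · have hsum : homologyMap (∑ n ∈ S, P n) m = ∑ n ∈ S, homologyMap (P n) m :=
      (homologyFunctor C c m).map_sum _ _
    rw [hsum, Finset.sum_eq_single_of_mem m hm fun n _ hn => hP_ne n m hn.symm, hP]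
  · exact (hS m hm).eq_of_src _ _

end Abelian

namespace DerivedCategory

variable {C : Type*} [Category C] [Abelian C] [HasDerivedCategory C]

lemma exists_retract_biproduct_shifts_of_quasiIso_sum {O : C}
    (hO : ∀ Y : C, ∃ (k : ℕ) (i : Y ⟶ ⨁ (fun _ : Fin k => O))
      (r : (⨁ (fun _ : Fin k => O)) ⟶ Y), i ≫ r = 𝟙 Y)
    {K : CochainComplex C ℤ} (S : Finset ℤ) {A : ℤ → C}
    (p : ∀ n, K ⟶ (single C (ComplexShape.up ℤ) n).obj (A n))
    (q : ∀ n, (single C (ComplexShape.up ℤ) n).obj (A n) ⟶ K) [QuasiIso (∑ n ∈ S, p n ≫ q n)] :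
    ∃ (s : ℕ) (m : Fin s → ℤ)
      (i : Q.obj K ⟶ ⨁ (fun j : Fin s => ((singleFunctor C 0).obj O)⟦m j⟧))
      (r : (⨁ (fun j : Fin s => ((singleFunctor C 0).obj O)⟦m j⟧)) ⟶ Q.obj K),
      i ≫ r = 𝟙 _ := by
  choose k iO rO hiO using hO
  let G (n : ℤ) := single C (ComplexShape.up ℤ) n ⋙ Q
  -- `O⟦-n⟧` is `O` placed in degree `n`
  let τ (n : ℤ) : (G n).obj O ≅ ((singleFunctor C 0).obj O)⟦-n⟧ :=
    ((singleFunctors C).shiftIso (-n) n 0 (neg_add_cancel n)).symm.app O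
  let a (n : S) (j : Fin (k (A n))) : Q.obj K ⟶ ((singleFunctor C 0).obj O)⟦-(n : ℤ)⟧ :=
    Q.map (p n) ≫ (G n).map (iO _ ≫ biproduct.π _ j) ≫ (τ n).hom
  let b (n : S) (j : Fin (k (A n))) : ((singleFunctor C 0).obj O)⟦-(n : ℤ)⟧ ⟶ Q.obj K :=
    (τ n).inv ≫ (G n).map (biproduct.ι (fun _ => O) j ≫ rO _) ≫ Q.map (q n)
  have hab : ∑ x : Σ n : S, Fin (k (A n)), a x.1 x.2 ≫ b x.1 x.2 =
      Q.map (∑ n ∈ S, p n ≫ q n) := by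
    rw [← Finset.univ_sigma_univ, ← Finset.sum_sigma' _ _ fun n j => a n j ≫ b n j,
      Functor.map_sum, ← Finset.sum_coe_sort S]
    refine Finset.sum_congr rfl fun n _ => ?_
    simp only [a, b, Category.assoc, Iso.hom_inv_id_assoc]
    simpa only [Category.assoc, Functor.map_comp] using
      sum_comp_map_π_comp_map_ι_comp (G n) _ _ _ (hiO _) (Q.map (p n)) (Q.map (q n))
  have : IsIso (∑ x : Σ n : S, Fin (k (A n)), a x.1 x.2 ≫ b x.1 x.2) := by
    rw [hab]; infer_instance
  exact exists_retract_fin_biproduct_of_isIso_sum (fun m => ((singleFunctor C 0).obj O)⟦m⟧)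
    (fun x : Σ n : S, Fin (k (A n)) => -(x.1 : ℤ)) (fun x => a x.1 x.2) (fun x => b x.1 x.2)

end DerivedCategory

open DerivedCategory

/-- Let `C` be an abelian category in which every short exact sequence splits (equivalently,
every monomorphism admits a retraction), and let `O` be an object of `C` such that every
object of `C` is a retract of a finite biproduct of copies of `O`.  Then every object `X` of
the derived category of `C` whose homology vanishes in all but finitely many degrees is a
retract of a finite biproduct of shifts of `O` (where `O⟦m⟧` denotes the shift by `m` of `O`
placed in degree `0`). -/
theorem retract_biproduct_shifts_of_generator
    (C : Type*) [Category C] [Abelian C] [HasDerivedCategory C]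
    (hsplit : ∀ (A B : C) (f : A ⟶ B), Mono f → ∃ r : B ⟶ A, f ≫ r = 𝟙 A)
    (O : C)
    (hO : ∀ Y : C, ∃ (k : ℕ) (i : Y ⟶ ⨁ (fun _ : Fin k => O))
      (r : (⨁ (fun _ : Fin k => O)) ⟶ Y), i ≫ r = 𝟙 Y)
    (X : DerivedCategory C)
    (hfin : Set.Finite {n : ℤ | ¬ IsZero ((DerivedCategory.homologyFunctor C n).obj X)}) :
    ∃ (s : ℕ) (m : Fin s → ℤ)
      (i : X ⟶ ⨁ (fun j : Fin s => ((DerivedCategory.singleFunctor C 0).obj O)⟦m j⟧))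
      (r : (⨁ (fun j : Fin s => ((DerivedCategory.singleFunctor C 0).obj O)⟦m j⟧)) ⟶ X),
      i ≫ r = 𝟙 X := by
  obtain ⟨K, ⟨eX⟩⟩ : ∃ K, Nonempty (Q.obj K ≅ X) := ⟨_, ⟨Q.objObjPreimageIso X⟩⟩
  choose p q hpq using exists_homologyMap_comp_single_eq_id hsplit K
  have hS (n : ℤ) (hn : n ∉ hfin.toFinset) : IsZero (K.homology n) := by
    rw [Set.Finite.mem_toFinset, Set.mem_ofPred_eq, not_not] at hn
    exact hn.of_iso ((homologyFunctorFactors C n).symm.app K ≪≫ (homologyFunctor C n).mapIso eX)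
  have : QuasiIso (∑ n ∈ hfin.toFinset, p n ≫ q n) := quasiIso_sum_of_homologyMap _ _ hpq
    (fun _ _ hmn => homologyMap_comp_single_eq_zero hmn _ _) hS
  obtain ⟨s, m, i, r, hir⟩ := exists_retract_biproduct_shifts_of_quasiIso_sum hO hfin.toFinset p q
  exact ⟨s, m, eX.inv ≫ i, r ≫ eX.hom, by simp [reassoc_of% hir]⟩
end
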